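/- Let A be a bialgebra over a field k and η : A ⊗ A → k a Hochschild 2-cocycle such that η(id ⊗ m) commutes with ε ⊗ η and η(m ⊗ id) commutes with η ⊗ ε in the convolution algebra Hom(A⊗A⊗A, k), and such that σ = e^η is a well-defined convolution-invertible map. Then σ = e^η satisfies the multiplicative 2-cocycle condition (ε ⊗ σ) * σ(id ⊗ m) = (σ ⊗ ε) * σ(m ⊗ id). -/

import Mathlib

/-!
Precomposition with a coalgebra morphism is a ring homomorphism between convolution algebras, and
`ε ⊗ f`, `f(id ⊗ m)`, `f ⊗ ε`, `f(m ⊗ id)` are the precompositions of `f` with four coalgebra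
morphisms `A ⊗ (A ⊗ A) → A ⊗ A`. Each of them therefore carries `σ = e^η` to the exponential of
the corresponding image of `η`, and the claim becomes `e^a e^b = e^c e^d` for nilpotent `a, b, c, d`
with `ab = ba`, `cd = dc` and `a + b = c + d` (the Hochschild condition): both sides equal
`e^(a + b)`.
-/

open TensorProduct

noncomputable section Stmt5

universe u

variable {k : Type u} [Field k]

/-- The convolution product on linear functionals on a coalgebra `C`:
`(f * g)(x) = f(x₁) g(x₂)` in Sweedler notation. -/
def conv {C : Type u} [AddCommGroup C] [Module k C]
    [Coalgebra k C] (f g : C →ₗ[k] k) : C →ₗ[k] k :=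
  LinearMap.mul' k k ∘ₗ TensorProduct.map f g ∘ₗ Coalgebra.comul

/-- Convolution powers `η^{*i}`, with `η^{*0} = ε` (the unit of the convolution algebra). -/
def convPow {C : Type u} [AddCommGroup C] [Module k C] [Coalgebra k C]
    (η : C →ₗ[k] k) : ℕ → (C →ₗ[k] k)
  | 0 => Coalgebra.counit
  | (n + 1) => conv η (convPow η n)

open WithConv

theorem IsNilpotent.exp_eq_sum_inv_factorial_smul (K : Type*) [DivisionRing K] [CharZero K]
    {B : Type*} [Ring B] [Module K B] [Module ℚ B] {a : B} {N : ℕ} (h : a ^ N = 0) :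
    IsNilpotent.exp a = ∑ i ∈ Finset.range N, ((Nat.factorial i : K))⁻¹ • a ^ i := by
  rw [IsNilpotent.exp_eq_sum h]
  refine Finset.sum_congr rfl fun i _ => ?_
  have hcast : ((Nat.factorial i : K))⁻¹ = (((Nat.factorial i : ℚ)⁻¹ : ℚ) : K) := by
    push_cast; rfl
  rw [hcast, ratCast_smul_eq K ℚ, Rat.cast_id]

theorem IsNilpotent.exp_mul_exp_eq_of_add_eq {B : Type*} [Ring B] [Module ℚ B] {a b c d : B}
    (ha : IsNilpotent a) (hb : IsNilpotent b) (hc : IsNilpotent c) (hd : IsNilpotent d)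
    (hab : Commute a b) (hcd : Commute c d) (h : a + b = c + d) :
    IsNilpotent.exp a * IsNilpotent.exp b = IsNilpotent.exp c * IsNilpotent.exp d := by
  rw [← IsNilpotent.exp_add_of_commute hab ha hb, h, IsNilpotent.exp_add_of_commute hcd hc hd]

namespace CoalgHom

variable {R B C D : Type*} [CommSemiring R] [Semiring B] [Algebra R B]
  [AddCommMonoid C] [Module R C] [Coalgebra R C] [AddCommMonoid D] [Module R D] [Coalgebra R D]

def precompConv (φ : C →ₗc[R] D) : WithConv (D →ₗ[R] B) →+* WithConv (C →ₗ[R] B) where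
  toFun f := toConv (f.ofConv ∘ₗ φ.toLinearMap)
  map_one' := by
    ext c
    simp
  map_mul' f g := by
    apply ofConv_injective
    exact LinearMap.convMul_comp_coalgHom_distrib f g φ
  map_zero' := rfl
  map_add' f g := rfl

theorem precompConv_apply (φ : C →ₗc[R] D) (f : WithConv (D →ₗ[R] B)) :
    φ.precompConv f = toConv (f.ofConv ∘ₗ φ.toLinearMap) := rfl

end CoalgHom

section Convolution

variable {C : Type u} [AddCommGroup C] [Module k C] [Coalgebra k C]

theorem toConv_conv (f g : C →ₗ[k] k) : toConv (conv f g) = toConv f * toConv g := rfl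

theorem toConv_convPow (η : C →ₗ[k] k) (n : ℕ) : toConv (convPow η n) = toConv η ^ n := by
  induction n with
  | zero => ext c; simp [convPow]
  | succ n ih => rw [convPow, toConv_conv, ih, pow_succ']

theorem toConv_sum_inv_factorial_smul_convPow [CharZero k] {η : C →ₗ[k] k} {N : ℕ}
    (hN : convPow η N = 0) :
    toConv (∑ i ∈ Finset.range N, ((Nat.factorial i : k))⁻¹ • convPow η i) =
      IsNilpotent.exp (toConv η) := by
  have hpow : toConv η ^ N = 0 := by rw [← toConv_convPow, hN, toConv_zero]
  simp only [IsNilpotent.exp_eq_sum_inv_factorial_smul k hpow, toConv_sum, toConv_smul,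
    toConv_convPow]

end Convolution

variable (k : Type u) [Field k] (A : Type u) [Ring A] [Bialgebra k A]

/-- `ε ⊗ f : A ⊗ (A ⊗ A) → k`. -/
def epsF (f : A ⊗[k] A →ₗ[k] k) : A ⊗[k] (A ⊗[k] A) →ₗ[k] k :=
  LinearMap.mul' k k ∘ₗ TensorProduct.map (Coalgebra.counit) f

/-- `f(id ⊗ m) : A ⊗ (A ⊗ A) → k`. -/
def fIdMul (f : A ⊗[k] A →ₗ[k] k) : A ⊗[k] (A ⊗[k] A) →ₗ[k] k :=
  f ∘ₗ TensorProduct.map LinearMap.id (LinearMap.mul' k A)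

/-- `f ⊗ ε : A ⊗ (A ⊗ A) → k`. -/
def fEps (f : A ⊗[k] A →ₗ[k] k) : A ⊗[k] (A ⊗[k] A) →ₗ[k] k :=
  LinearMap.mul' k k ∘ₗ TensorProduct.map f (Coalgebra.counit) ∘ₗ
    (TensorProduct.assoc k A A A).symm.toLinearMap

/-- `f(m ⊗ id) : A ⊗ (A ⊗ A) → k`. -/
def fMulId (f : A ⊗[k] A →ₗ[k] k) : A ⊗[k] (A ⊗[k] A) →ₗ[k] k :=
  f ∘ₗ TensorProduct.map (LinearMap.mul' k A) LinearMap.id ∘ₗ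
    (TensorProduct.assoc k A A A).symm.toLinearMap

theorem toConv_epsF (f : A ⊗[k] A →ₗ[k] k) :
    toConv (epsF k A f) =
      ((Coalgebra.TensorProduct.lid k (A ⊗[k] A)).toCoalgHom.comp
        (Coalgebra.TensorProduct.map (Coalgebra.counitCoalgHom k A)
          (CoalgHom.id k (A ⊗[k] A)))).precompConv (toConv f) := by
  ext a b c
  simp [epsF, CoalgHom.precompConv_apply]

theorem toConv_fIdMul (f : A ⊗[k] A →ₗ[k] k) :
    toConv (fIdMul k A f) =
      (Coalgebra.TensorProduct.map (CoalgHom.id k A) (Bialgebra.mulCoalgHom k A)).precompConv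
        (toConv f) := by
  ext a b c
  simp [fIdMul, CoalgHom.precompConv_apply]

theorem toConv_fEps (f : A ⊗[k] A →ₗ[k] k) :
    toConv (fEps k A f) =
      (((Coalgebra.TensorProduct.rid k k (A ⊗[k] A)).toCoalgHom.comp
        (Coalgebra.TensorProduct.map (CoalgHom.id k (A ⊗[k] A))
          (Coalgebra.counitCoalgHom k A))).comp
        (Coalgebra.TensorProduct.assoc k k A A A).symm.toCoalgHom).precompConv (toConv f) := by
  ext a b c
  simp [fEps, CoalgHom.precompConv_apply, mul_comm]

theorem toConv_fMulId (f : A ⊗[k] A →ₗ[k] k) :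
    toConv (fMulId k A f) =
      ((Coalgebra.TensorProduct.map (Bialgebra.mulCoalgHom k A) (CoalgHom.id k A)).comp
        (Coalgebra.TensorProduct.assoc k k A A A).symm.toCoalgHom).precompConv (toConv f) := by
  ext a b c
  simp [fMulId, CoalgHom.precompConv_apply]

theorem stmt5 [CharZero k] (η : A ⊗[k] A →ₗ[k] k)
    -- Hochschild 2-cocycle condition
    (hHoch : epsF k A η + fIdMul k A η = fEps k A η + fMulId k A η)
    -- `η(id ⊗ m)` commutes with `ε ⊗ η`
    (hcomm1 : conv (epsF k A η) (fIdMul k A η) = conv (fIdMul k A η) (epsF k A η))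
    -- `η(m ⊗ id)` commutes with `η ⊗ ε`
    (hcomm2 : conv (fEps k A η) (fMulId k A η) = conv (fMulId k A η) (fEps k A η))
    -- local nilpotency, making `e^η` a finite sum
    (N : ℕ) (hN : convPow η N = 0)
    -- `σ = e^η = Σ η^{*i}/i!`, a finite sum by nilpotency
    (σ : A ⊗[k] A →ₗ[k] k)
    (hσ : σ = ∑ i ∈ Finset.range N, ((Nat.factorial i : k))⁻¹ • convPow η i) :
    conv (epsF k A σ) (fIdMul k A σ) = conv (fEps k A σ) (fMulId k A σ) := by
  have hexp : toConv σ = IsNilpotent.exp (toConv η) :=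
    hσ ▸ toConv_sum_inv_factorial_smul_convPow hN
  have hnil : IsNilpotent (toConv η) := ⟨N, by rw [← toConv_convPow, hN, toConv_zero]⟩
  have hab : Commute (toConv (epsF k A η)) (toConv (fIdMul k A η)) := congrArg toConv hcomm1
  have hcd : Commute (toConv (fEps k A η)) (toConv (fMulId k A η)) := congrArg toConv hcomm2
  have hsum := congrArg toConv hHoch
  rw [toConv_add, toConv_add] at hsum
  apply toConv_injective
  rw [toConv_conv, toConv_conv]
  simp only [toConv_epsF, toConv_fIdMul, toConv_fEps, toConv_fMulId, hexp,
    IsNilpotent.map_exp hnil] at hab hcd hsum ⊢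
  exact IsNilpotent.exp_mul_exp_eq_of_add_eq (hnil.map _) (hnil.map _) (hnil.map _)
    (hnil.map _) hab hcd hsum

end Stmt5
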